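/- Let n ≥ 2, let d_1, …, d_n be unit vectors in ℂ^m, let p = (p_1,…,p_n) be a probability vector, and let u_1, …, u_n be an orthonormal family in ℂ^n. For the pure bipartite input state ψ_AB = Σ_i √p_i · e_i ⊗ u_i with reduced state ρ_A ((ρ_A)_{ik} = √(p_i p_k) ⟨u_k, u_i⟩) and post-interaction bipartite state ρ̃_AB = Σ_{i,j} √(p_i p_j) ⟨d_j, d_i⟩ (e_i e_j^*) ⊗ (u_i u_j^*), one has: V(ρ̃_A) = 0, E(ψ_AB)² = (2(n−1)/n²)(1 − Σ_i p_i²), and (P_s(p) − 1/n)² + E(ψ_AB)² ≤ (n²−1)/n² − (2(n−1)/n²)·Tr(ρ̃_AB²). -/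

import Mathlib

/-!
For orthonormal memory states the reduced state of the particle is diagonal, so the visibility
vanishes and `Tr((Tr_B ψψ^*)²) = ∑ pᵢ²`, while `Tr(ρ̃_AB²) = ∑ pᵢ pₖ |⟨dₖ, dᵢ⟩|²`. The duality
then reduces to the discrimination bound
`(n P - 1)² + 2(n - 1) ∑_{i ≠ k} pᵢ pₖ |⟨dₖ, dᵢ⟩|² ≤ (n - 1)²` for every POVM whose success
probability `P` is at least `1/n`.

With `tᵢ = ⟨dᵢ, Πᵢ dᵢ⟩` and `sᵢₖ = ⟨dᵢ, Πₖ dᵢ⟩ ≤ 1 - tᵢ`, Cauchy–Schwarz for the two-outcome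
measurement `{Πₖ, 1 - Πₖ}` gives `|⟨dᵢ, dₖ⟩| ≤ √(sᵢₖ tₖ) + √((1 - sᵢₖ)(1 - tₖ))`. For `n = 2`
this is Helstrom's bound. For `n ≥ 3` it is relaxed to a bound bilinear in `(√tᵢ, √(1 - tᵢ))`,
whose off-diagonal sum Cauchy–Schwarz controls by `(1 - 1/n)(1 - P)(1 + 3P)`; a polynomial
inequality in `P` finishes.
-/

open Matrix ComplexOrder

noncomputable section

/-- Inner product ⟨a, b⟩ = ∑ i, conj (a i) * b i on a finite-dimensional complex space. -/
def ip {k : Type*} [Fintype k] (a b : k → ℂ) : ℂ := ∑ i, star (a i) * b i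

/-- The optimal success probability of minimum-error discrimination of the detector
states `d i` with prior probabilities `q i`: the supremum over all POVMs
`Pov` (positive semidefinite matrices summing to the identity) of
`∑ i, q i * ⟨d i, Pov i (d i)⟩`. -/
def Ps {m n : ℕ} (d : Fin n → Fin m → ℂ) (q : Fin n → ℝ) : ℝ :=
  sSup { x : ℝ | ∃ Pov : Fin n → Matrix (Fin m) (Fin m) ℂ,
    (∀ i, (Pov i).PosSemidef) ∧ (∑ i, Pov i) = 1 ∧
    x = ∑ i, q i * (ip (d i) ((Pov i) *ᵥ (d i))).re }

/-- The visibility `V(ρ̃_A) = √( (2(n−1)/n²) ∑_{i≠k} |⟨d_k, d_i⟩|² |(ρ_A)_{ik}|² )`. -/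
def Vis {m n : ℕ} (d : Fin n → Fin m → ℂ) (ρ : Matrix (Fin n) (Fin n) ℂ) : ℝ :=
  Real.sqrt ((2 * ((n : ℝ) - 1) / (n : ℝ) ^ 2) *
    ∑ i, ∑ k, if i = k then 0 else ‖ip (d k) (d i)‖ ^ 2 * ‖ρ i k‖ ^ 2)

/-- The post-interaction detector state `ρ̃_D = ∑ i, q i • d i (d i)^*`. -/
def detState {m n : ℕ} (d : Fin n → Fin m → ℂ) (q : Fin n → ℝ) :
    Matrix (Fin m) (Fin m) ℂ :=
  ∑ i, (q i : ℂ) • vecMulVec (d i) (star (d i))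

/-- The post-interaction particle state `(ρ̃_A)_{ik} = ⟨d_k, d_i⟩ (ρ_A)_{ik}`. -/
def post {m n : ℕ} (d : Fin n → Fin m → ℂ) (ρ : Matrix (Fin n) (Fin n) ℂ) :
    Matrix (Fin n) (Fin n) ℂ :=
  Matrix.of fun i k => ip (d k) (d i) * ρ i k

/-- The purity `Tr(ρ²)` (as a real number). -/
def purity {k : Type*} [Fintype k] (ρ : Matrix k k ℂ) : ℝ := ((ρ * ρ).trace).re

/-- Partial trace over the second tensor factor: `(Tr_B ρ)_{ik} = ∑ j, ρ_{(i,j),(k,j)}`. -/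
def ptraceB {n : ℕ} (ρ : Matrix (Fin n × Fin n) (Fin n × Fin n) ℂ) :
    Matrix (Fin n) (Fin n) ℂ :=
  Matrix.of fun i k => ∑ j, ρ (i, j) (k, j)

section InnerProduct

variable {k : Type*} [Fintype k]

lemma ip_eq_dotProduct (a b : k → ℂ) : ip a b = star a ⬝ᵥ b := rfl

lemma ip_add_right (a u v : k → ℂ) : ip a (u + v) = ip a u + ip a v := dotProduct_add _ _ _

lemma ip_smul_right (a v : k → ℂ) (c : ℂ) : ip a (c • v) = c * ip a v :=
  dotProduct_smul _ _ _

lemma ip_sub_right (a u v : k → ℂ) : ip a (u - v) = ip a u - ip a v := dotProduct_sub _ _ _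

lemma star_ip (a b : k → ℂ) : star (ip a b) = ip b a := by
  simp only [ip, star_sum, star_mul', star_star, mul_comm]

lemma norm_ip_comm (a b : k → ℂ) : ‖ip a b‖ = ‖ip b a‖ := by
  rw [← star_ip, norm_star]

lemma ip_sum_mulVec {ι : Type*} (a b : k → ℂ) (M : ι → Matrix k k ℂ) (s : Finset ι) :
    ip a ((∑ j ∈ s, M j) *ᵥ b) = ∑ j ∈ s, ip a (M j *ᵥ b) := by
  simp only [ip, Matrix.sum_mulVec, Finset.sum_apply, Finset.mul_sum]
  exact Finset.sum_comm

lemma ip_eq_inner (a b : k → ℂ) : ip a b = inner ℂ (WithLp.toLp 2 a) (WithLp.toLp 2 b) := by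
  simp [PiLp.inner_apply, ip, mul_comm]

lemma norm_ip_le (a b : k → ℂ) : ‖ip a b‖ ≤ √(ip a a).re * √(ip b b).re := by
  simp only [ip_eq_inner, ← RCLike.re_eq_complex_re, inner_self_eq_norm_sq, norm_nonneg,
    Real.sqrt_sq]
  exact norm_inner_le_norm _ _

lemma ip_conjTranspose_mul_mulVec (B : Matrix k k ℂ) (a b : k → ℂ) :
    ip a ((Bᴴ * B) *ᵥ b) = ip (B *ᵥ a) (B *ᵥ b) := by
  rw [ip_eq_dotProduct, ip_eq_dotProduct, ← mulVec_mulVec, dotProduct_mulVec, ← star_mulVec]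

lemma Matrix.PosSemidef.norm_ip_mulVec_le {A : Matrix k k ℂ} (hA : A.PosSemidef)
    (a b : k → ℂ) :
    ‖ip a (A *ᵥ b)‖ ≤ √(ip a (A *ᵥ a)).re * √(ip b (A *ᵥ b)).re := by
  classical
  obtain ⟨B, rfl⟩ : ∃ B : Matrix k k ℂ, A = star B * B := by
    open scoped MatrixOrder Matrix.Norms.L2Operator in
    exact CStarAlgebra.nonneg_iff_eq_star_mul_self.mp hA.nonneg
  simp only [star_eq_conjTranspose, ip_conjTranspose_mul_mulVec]
  exact norm_ip_le _ _

lemma Matrix.PosSemidef.re_ip_mulVec_nonneg {A : Matrix k k ℂ} (hA : A.PosSemidef)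
    (a : k → ℂ) :
    0 ≤ (ip a (A *ᵥ a)).re :=
  hA.re_dotProduct_nonneg a

lemma norm_ip_le_of_add_eq_one [DecidableEq k] {P Q : Matrix k k ℂ} (hP : P.PosSemidef)
    (hQ : Q.PosSemidef) (hPQ : P + Q = 1) (a b : k → ℂ) :
    ‖ip a b‖ ≤ √(ip a (P *ᵥ a)).re * √(ip b (P *ᵥ b)).re
      + √(ip a (Q *ᵥ a)).re * √(ip b (Q *ᵥ b)).re := by
  have hsplit : ip a b = ip a (P *ᵥ b) + ip a (Q *ᵥ b) := by
    rw [← ip_add_right, ← add_mulVec, hPQ, one_mulVec]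
  rw [hsplit]
  exact (norm_add_le _ _).trans
    (add_le_add (hP.norm_ip_mulVec_le a b) (hQ.norm_ip_mulVec_le a b))

end InnerProduct

section Scalar

/-- When `F ≤ y` the right side is at least `1`; otherwise `A * F + B * G` only grows as `(A, B)`
moves along the unit circle to `(y, x)`. -/
lemma mul_add_mul_sq_le_of_le {A B x y F G : ℝ} (hA : 0 ≤ A) (hB : 0 ≤ B) (hx : 0 ≤ x)
    (hy : 0 ≤ y) (hF : 0 ≤ F) (hG : 0 ≤ G) (hAB : A ^ 2 + B ^ 2 = 1) (hxy : x ^ 2 + y ^ 2 = 1)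
    (hFG : F ^ 2 + G ^ 2 = 1) (hAy : A ≤ y) :
    (A * F + B * G) ^ 2 ≤ (y * F + x * G) ^ 2 + y ^ 2 * G ^ 2 := by
  have hxB : x ≤ B := by nlinarith [mul_self_le_mul_self hA hAy]
  rcases le_total F y with hFy | hyF
  · have hxG : x ≤ G := by nlinarith [mul_self_le_mul_self hF hFy]
    have hle_one : (A * F + B * G) ^ 2 ≤ 1 := by nlinarith [sq_nonneg (A * G - B * F)]
    have hone_le : 1 ≤ (y * F + x * G) ^ 2 + y ^ 2 * G ^ 2 := by
      nlinarith [mul_nonneg (mul_nonneg hx hF) (by nlinarith [mul_le_mul hFy hxG hx hy] :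
        0 ≤ 2 * y * G - x * F)]
    linarith
  · have hGx : G ≤ x := by nlinarith [mul_self_le_mul_self hy hyF]
    have hK : 0 ≤ F * (B + x) - G * (y + A) := by
      nlinarith [mul_le_mul (hGx.trans hxB) hyF hy hB, mul_le_mul hGx (hAy.trans hyF) hA hx]
    have hsq : (y - A) * (y + A) = (B - x) * (B + x) := by linear_combination hxy - hAB
    have hD : 0 ≤ (B + x + y + A) * (F * (y - A) - G * (B - x)) := by
      nlinarith [mul_nonneg (sub_nonneg.2 hAy) hK, mul_nonneg (sub_nonneg.2 hxB) hK]
    have hpos : 0 < B + x + y + A := by nlinarith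
    have hmono : A * F + B * G ≤ y * F + x * G := by
      linarith [nonneg_of_mul_nonneg_right hD hpos]
    nlinarith [pow_le_pow_left₀ (by positivity) hmono 2, sq_nonneg (y * G)]

lemma sq_sub_one_add_four_mul_le_one {p₀ p₁ x₀ y₀ x₁ y₁ : ℝ} (hp : p₀ + p₁ = 1)
    (h₀ : x₀ ^ 2 + y₀ ^ 2 = 1) (h₁ : x₁ ^ 2 + y₁ ^ 2 = 1) :
    (2 * (p₀ * x₀ ^ 2 + p₁ * x₁ ^ 2) - 1) ^ 2 + 4 * p₀ * p₁ * (y₀ * x₁ + x₀ * y₁) ^ 2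
      ≤ 1 := by
  have key : (2 * (p₀ * x₀ ^ 2 + p₁ * x₁ ^ 2) - 1) ^ 2
      + 4 * p₀ * p₁ * (y₀ * x₁ + x₀ * y₁) ^ 2 + 4 * (p₀ * x₀ * y₀ - p₁ * x₁ * y₁) ^ 2 = 1 := by
    linear_combination (4 * (p₀ * x₀ ^ 2 + p₁ * x₁ ^ 2)) * (hp + p₀ * h₀ + p₁ * h₁)
  linarith [sq_nonneg (p₀ * x₀ * y₀ - p₁ * x₁ * y₁)]

lemma sq_mul_sub_one_add_le_of_three_le {n V : ℝ} (hn : 3 ≤ n) (hV : 1 ≤ n * V) (hV1 : V ≤ 1) :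
    (n * V - 1) ^ 2 + 2 * (n - 1) * ((1 - 1 / n) * (1 - V) * (1 + 3 * V)) ≤ (n - 1) ^ 2 := by
  set L := n ^ 3 * (n - 2) - 2 * n * (n - 1) ^ 2 + n * V * ((n - 2) ^ 3 + 2)
  have hL : 0 ≤ L := by
    have h3 : 0 ≤ n - 3 := by linarith
    have h2 : 0 ≤ (n - 2) ^ 3 + 2 := by
      have : 0 ≤ n - 2 := by linarith
      positivity
    nlinarith [mul_le_mul_of_nonneg_right hV h2,
      mul_nonneg (mul_nonneg (mul_nonneg h3 h3) h3) h3, mul_nonneg (mul_nonneg h3 h3) h3,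
      mul_nonneg h3 h3]
  have hid : (n - 1) ^ 2
      - ((n * V - 1) ^ 2 + 2 * (n - 1) * ((1 - 1 / n) * (1 - V) * (1 + 3 * V)))
      = (1 - V) * L / n ^ 2 := by
    field_simp
    ring
  have : 0 ≤ (1 - V) * L / n ^ 2 := by
    have : 0 ≤ 1 - V := by linarith
    positivity
  linarith

end Scalar

section OffDiagonal

open Finset

variable {ι : Type*} [Fintype ι] [DecidableEq ι]

lemma sum_sum_erase_eq_sub {R : Type*} [AddCommGroup R] (f : ι → ι → R) :
    ∑ i, ∑ k ∈ univ.erase i, f i k = ∑ i, ∑ k, f i k - ∑ i, f i i := by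
  simp only [sum_erase_eq_sub (mem_univ _), sum_sub_distrib]

/-- The summand is bilinear in `(x, y)`: Cauchy–Schwarz bounds the diagonal terms from below and
`(∑ pᵢ xᵢ yᵢ)²` from above by `V (1 - V)`, where `V = ∑ pᵢ xᵢ²`. -/
lemma sum_offDiag_le (p x y : ι → ℝ) (hp : ∀ i, 0 ≤ p i) (hp1 : ∑ i, p i = 1)
    (hxy : ∀ i, x i ^ 2 + y i ^ 2 = 1) (hcard : 2 ≤ Fintype.card ι) :
    ∑ i, ∑ k ∈ univ.erase i, p i * p k * ((y i * x k + x i * y k) ^ 2 + y i ^ 2 * y k ^ 2)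
      ≤ (1 - 1 / Fintype.card ι) * (1 - ∑ i, p i * x i ^ 2)
        * (1 + 3 * ∑ i, p i * x i ^ 2) := by
  have hn : (2 : ℝ) ≤ Fintype.card ι := by exact_mod_cast hcard
  set n : ℝ := (Fintype.card ι : ℝ)
  set V := ∑ i, p i * x i ^ 2
  set B := ∑ i, p i * (x i * y i)
  have hW : ∑ i, p i * y i ^ 2 = 1 - V := by
    rw [← hp1, ← sum_sub_distrib]
    exact sum_congr rfl fun i _ => by linear_combination p i * hxy i
  have hfull : ∑ i, ∑ k, p i * p k * ((y i * x k + x i * y k) ^ 2 + y i ^ 2 * y k ^ 2)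
      = 2 * V * (1 - V) + 2 * B ^ 2 + (1 - V) ^ 2 := by
    have h : ∀ i k, p i * p k * ((y i * x k + x i * y k) ^ 2 + y i ^ 2 * y k ^ 2)
        = p i * y i ^ 2 * (p k * x k ^ 2) + p i * x i ^ 2 * (p k * y k ^ 2)
          + 2 * (p i * (x i * y i)) * (p k * (x k * y k)) + p i * y i ^ 2 * (p k * y k ^ 2) := by
      intro i k; ring
    simp only [h, sum_add_distrib, ← mul_sum, ← sum_mul, hW]
    ring
  have hdiag : (2 * B) ^ 2 + (1 - V) ^ 2 ≤
      n * ∑ i, p i * p i * ((y i * x i + x i * y i) ^ 2 + y i ^ 2 * y i ^ 2) := by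
    have h1 := sq_sum_le_card_mul_sum_sq (s := univ) (f := fun i => 2 * (p i * (x i * y i)))
    have h2 := sq_sum_le_card_mul_sum_sq (s := univ) (f := fun i => p i * y i ^ 2)
    simp only [card_univ, ← mul_sum, hW] at h1 h2
    have h : ∀ i, p i * p i * ((y i * x i + x i * y i) ^ 2 + y i ^ 2 * y i ^ 2)
        = (2 * (p i * (x i * y i))) ^ 2 + (p i * y i ^ 2) ^ 2 := fun i => by ring
    simp only [h, sum_add_distrib, mul_add]
    linarith
  have hB : B ^ 2 ≤ V * (1 - V) := by
    rw [← hW]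
    exact sum_sq_le_sum_mul_sum_of_sq_le_mul univ (fun i _ => mul_nonneg (hp i) (sq_nonneg _))
      (fun i _ => mul_nonneg (hp i) (sq_nonneg _)) fun i _ => le_of_eq (by ring)
  have hn0 : 0 < n := by linarith
  have h24 : 0 ≤ 2 - 4 / n := by rw [sub_nonneg, div_le_iff₀ hn0]; linarith
  have hB' := mul_le_mul_of_nonneg_left hB h24
  rw [← div_le_iff₀' hn0] at hdiag
  have e1 : ((2 * B) ^ 2 + (1 - V) ^ 2) / n = 4 / n * B ^ 2 + (1 - V) ^ 2 / n := by ring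
  have e2 : (1 - 1 / n) * (1 - V) * (1 + 3 * V) = 2 * V * (1 - V) + (1 - V) ^ 2
      + (2 - 4 / n) * (V * (1 - V)) - (1 - V) ^ 2 / n := by field_simp; ring
  rw [sum_sum_erase_eq_sub, hfull, e2]
  linarith

end OffDiagonal

section POVM

open Finset

variable {ι k : Type*} [Fintype ι] [DecidableEq k] {Pov : ι → Matrix k k ℂ}

lemma sum_re_ip_povm [Fintype k] (hsum : ∑ i, Pov i = 1) {a : k → ℂ} (ha : ip a a = 1) :
    ∑ j, (ip a (Pov j *ᵥ a)).re = 1 := by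
  rw [← Complex.re_sum, ← ip_sum_mulVec, hsum, one_mulVec, ha, Complex.one_re]

lemma re_ip_povm_add_le_one [Fintype k] [DecidableEq ι] (hpos : ∀ i, (Pov i).PosSemidef)
    (hsum : ∑ i, Pov i = 1) {a : k → ℂ} (ha : ip a a = 1) {j l : ι} (hjl : j ≠ l) :
    (ip a (Pov j *ᵥ a)).re + (ip a (Pov l *ᵥ a)).re ≤ 1 := by
  rw [← sum_re_ip_povm hsum ha, ← sum_pair (f := fun i => (ip a (Pov i *ᵥ a)).re) hjl]
  exact sum_le_sum_of_subset_of_nonneg (subset_univ _)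
    fun i _ _ => (hpos i).re_ip_mulVec_nonneg a

lemma posSemidef_one_sub_povm [DecidableEq ι] (hpos : ∀ i, (Pov i).PosSemidef)
    (hsum : ∑ i, Pov i = 1) (j : ι) :
    (1 - Pov j).PosSemidef := by
  rw [← hsum, ← add_sum_erase _ _ (mem_univ j), add_sub_cancel_left]
  exact posSemidef_sum _ fun i _ => hpos i

lemma norm_ip_le_povm [Fintype k] [DecidableEq ι] (hpos : ∀ i, (Pov i).PosSemidef)
    (hsum : ∑ i, Pov i = 1) {a b : k → ℂ} (ha : ip a a = 1) (hb : ip b b = 1) (j : ι) :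
    ‖ip a b‖ ≤ √(ip a (Pov j *ᵥ a)).re * √(ip b (Pov j *ᵥ b)).re
      + √(1 - (ip a (Pov j *ᵥ a)).re) * √(1 - (ip b (Pov j *ᵥ b)).re) := by
  have hQ (v : k → ℂ) (hv : ip v v = 1) :
      (ip v ((1 - Pov j) *ᵥ v)).re = 1 - (ip v (Pov j *ᵥ v)).re := by
    rw [sub_mulVec, one_mulVec, ip_sub_right, hv, Complex.sub_re, Complex.one_re]
  rw [← hQ a ha, ← hQ b hb]
  exact norm_ip_le_of_add_eq_one (hpos j) (posSemidef_one_sub_povm hpos hsum j)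
    (add_sub_cancel _ _) a b

lemma re_ip_povm_le_one [Fintype k] (hpos : ∀ i, (Pov i).PosSemidef) (hsum : ∑ i, Pov i = 1)
    {a : k → ℂ} (ha : ip a a = 1) (j : ι) : (ip a (Pov j *ᵥ a)).re ≤ 1 := by
  rw [← sum_re_ip_povm hsum ha]
  exact single_le_sum (fun i _ => (hpos i).re_ip_mulVec_nonneg a) (mem_univ j)

lemma norm_ip_sq_le_of_ne [Fintype k] [DecidableEq ι] (hpos : ∀ i, (Pov i).PosSemidef)
    (hsum : ∑ i, Pov i = 1) {a b : k → ℂ} (ha : ip a a = 1) (hb : ip b b = 1) {i j : ι}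
    (hij : i ≠ j) :
    ‖ip a b‖ ^ 2 ≤ (√(1 - (ip a (Pov i *ᵥ a)).re) * √(ip b (Pov j *ᵥ b)).re
        + √(ip a (Pov i *ᵥ a)).re * √(1 - (ip b (Pov j *ᵥ b)).re)) ^ 2
      + √(1 - (ip a (Pov i *ᵥ a)).re) ^ 2 * √(1 - (ip b (Pov j *ᵥ b)).re) ^ 2 := by
  have hunit {s : ℝ} (h0 : 0 ≤ s) (h1 : s ≤ 1) : √s ^ 2 + √(1 - s) ^ 2 = 1 := by
    rw [Real.sq_sqrt h0, Real.sq_sqrt (by linarith)]; ring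
  have hnn (l : ι) (v : k → ℂ) := (hpos l).re_ip_mulVec_nonneg v
  have hle1 (l : ι) {v : k → ℂ} (hv : ip v v = 1) := re_ip_povm_le_one hpos hsum hv l
  have hoff : √(ip a (Pov j *ᵥ a)).re ≤ √(1 - (ip a (Pov i *ᵥ a)).re) :=
    Real.sqrt_le_sqrt (by linarith [re_ip_povm_add_le_one hpos hsum ha hij])
  calc ‖ip a b‖ ^ 2
      ≤ (√(ip a (Pov j *ᵥ a)).re * √(ip b (Pov j *ᵥ b)).re
          + √(1 - (ip a (Pov j *ᵥ a)).re) * √(1 - (ip b (Pov j *ᵥ b)).re)) ^ 2 :=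
        pow_le_pow_left₀ (norm_nonneg _) (norm_ip_le_povm hpos hsum ha hb j) 2
    _ ≤ _ := mul_add_mul_sq_le_of_le (Real.sqrt_nonneg _) (Real.sqrt_nonneg _)
        (Real.sqrt_nonneg _) (Real.sqrt_nonneg _) (Real.sqrt_nonneg _) (Real.sqrt_nonneg _)
        (hunit (hnn j a) (hle1 j ha)) (hunit (hnn i a) (hle1 i ha))
        (hunit (hnn j b) (hle1 j hb)) hoff

end POVM

theorem helstrom_bound {k : Type*} [Fintype k] [DecidableEq k] {d : Fin 2 → k → ℂ}
    (hd : ∀ i, ip (d i) (d i) = 1) {p : Fin 2 → ℝ} (hp : ∀ i, 0 ≤ p i) (hp1 : p 0 + p 1 = 1)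
    {Pov : Fin 2 → Matrix k k ℂ} (hpos : ∀ i, (Pov i).PosSemidef) (hsum : ∑ i, Pov i = 1) :
    (2 * (p 0 * (ip (d 0) (Pov 0 *ᵥ d 0)).re + p 1 * (ip (d 1) (Pov 1 *ᵥ d 1)).re) - 1) ^ 2
      + 4 * p 0 * p 1 * ‖ip (d 0) (d 1)‖ ^ 2 ≤ 1 := by
  set t : Fin 2 → ℝ := fun i => (ip (d i) (Pov i *ᵥ d i)).re
  have hx2 (i : Fin 2) : √(t i) ^ 2 = t i := Real.sq_sqrt ((hpos i).re_ip_mulVec_nonneg _)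
  have hy2 (i : Fin 2) : √(1 - t i) ^ 2 = 1 - t i :=
    Real.sq_sqrt (by linarith [re_ip_povm_le_one hpos hsum (hd i) i])
  have hs : (ip (d 0) (Pov 1 *ᵥ d 0)).re = 1 - t 0 := by
    have h := sum_re_ip_povm hsum (hd 0)
    rw [Fin.sum_univ_two] at h
    linarith
  have hγ : ‖ip (d 0) (d 1)‖ ≤ √(1 - t 0) * √(t 1) + √(t 0) * √(1 - t 1) := by
    simpa only [hs, sub_sub_cancel] using norm_ip_le_povm hpos hsum (hd 0) (hd 1) 1
  have h := sq_sub_one_add_four_mul_le_one hp1 (x₀ := √(t 0)) (y₀ := √(1 - t 0))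
    (x₁ := √(t 1)) (y₁ := √(1 - t 1)) (by rw [hx2, hy2]; ring) (by rw [hx2, hy2]; ring)
  rw [hx2, hx2] at h
  nlinarith [mul_le_mul_of_nonneg_left (pow_le_pow_left₀ (norm_nonneg _) hγ 2)
    (mul_nonneg (hp 0) (hp 1))]

open Finset in
theorem sq_success_sub_one_add_offDiag_le {n : ℕ} (hn : 2 ≤ n) {k : Type*} [Fintype k]
    [DecidableEq k] {d : Fin n → k → ℂ} (hd : ∀ i, ip (d i) (d i) = 1) {p : Fin n → ℝ}
    (hp : ∀ i, 0 ≤ p i) (hp1 : ∑ i, p i = 1) {Pov : Fin n → Matrix k k ℂ}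
    (hpos : ∀ i, (Pov i).PosSemidef) (hsum : ∑ i, Pov i = 1)
    (hV : 1 ≤ n * ∑ i, p i * (ip (d i) (Pov i *ᵥ d i)).re) :
    (n * ∑ i, p i * (ip (d i) (Pov i *ᵥ d i)).re - 1) ^ 2
      + 2 * (n - 1) * ∑ i, ∑ k ∈ univ.erase i, p i * p k * ‖ip (d k) (d i)‖ ^ 2
      ≤ ((n : ℝ) - 1) ^ 2 := by
  rcases hn.eq_or_lt with rfl | hn3
  · have h := helstrom_bound hd hp (by rwa [Fin.sum_univ_two] at hp1) hpos hsum
    rw [sum_sum_erase_eq_sub]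
    simp only [Fin.sum_univ_two, norm_ip_comm (d 1) (d 0), Nat.cast_ofNat] at h ⊢
    linarith
  set t : Fin n → ℝ := fun i => (ip (d i) (Pov i *ᵥ d i)).re
  have ht1 (i : Fin n) : t i ≤ 1 := re_ip_povm_le_one hpos hsum (hd i) i
  set x : Fin n → ℝ := fun i => √(t i)
  set y : Fin n → ℝ := fun i => √(1 - t i)
  have hx2 (i : Fin n) : x i ^ 2 = t i := Real.sq_sqrt ((hpos i).re_ip_mulVec_nonneg _)
  have hxy (i : Fin n) : x i ^ 2 + y i ^ 2 = 1 := by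
    rw [hx2, Real.sq_sqrt (by linarith [ht1 i])]; ring
  have hV_eq : ∑ i, p i * t i = ∑ i, p i * x i ^ 2 := by simp only [hx2]
  rw [hV_eq] at hV ⊢
  have hpair : ∑ i, ∑ k ∈ univ.erase i, p i * p k * ‖ip (d k) (d i)‖ ^ 2
      ≤ ∑ i, ∑ k ∈ univ.erase i,
        p i * p k * ((y i * x k + x i * y k) ^ 2 + y i ^ 2 * y k ^ 2) := by
    refine sum_le_sum fun i _ => sum_le_sum fun k hk => ?_
    rw [norm_ip_comm]
    exact mul_le_mul_of_nonneg_left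
      (norm_ip_sq_le_of_ne hpos hsum (hd i) (hd k) (ne_of_mem_erase hk).symm)
      (mul_nonneg (hp i) (hp k))
  have hagg := sum_offDiag_le p x y hp hp1 hxy (by simpa using hn3.le)
  rw [Fintype.card_fin] at hagg
  have hV1 : ∑ i, p i * x i ^ 2 ≤ 1 := by
    rw [← hp1]
    exact sum_le_sum fun i _ => by nlinarith [hp i, hx2 i, ht1 i]
  have hn1 : 0 ≤ 2 * ((n : ℝ) - 1) := by
    have : (2 : ℝ) ≤ n := by exact_mod_cast hn3.le
    linarith
  nlinarith [sq_mul_sub_one_add_le_of_three_le (by exact_mod_cast hn3) hV hV1,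
    mul_le_mul_of_nonneg_left (hpair.trans hagg) hn1]

lemma sSup_sub_sq_le {S : Set ℝ} {a R : ℝ} (ha : a ∈ S)
    (h : ∀ x ∈ S, a ≤ x → (x - a) ^ 2 ≤ R) :
    (sSup S - a) ^ 2 ≤ R := by
  have hR : 0 ≤ R := by simpa using h a ha le_rfl
  have hub : ∀ x ∈ S, x ≤ a + √R := fun x hx => by
    rcases le_total a x with hax | hxa
    · linarith [Real.abs_le_sqrt (h x hx hax), le_abs_self (x - a)]
    · linarith [Real.sqrt_nonneg R]
  have hlow : a ≤ sSup S := le_csSup ⟨_, hub⟩ ha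
  have hup : sSup S ≤ a + √R := csSup_le ⟨a, ha⟩ hub
  calc (sSup S - a) ^ 2 ≤ √R ^ 2 := pow_le_pow_left₀ (by linarith) (by linarith) 2
    _ = R := Real.sq_sqrt hR

def povmValues {m n : ℕ} (d : Fin n → Fin m → ℂ) (q : Fin n → ℝ) : Set ℝ :=
  { x : ℝ | ∃ Pov : Fin n → Matrix (Fin m) (Fin m) ℂ,
    (∀ i, (Pov i).PosSemidef) ∧ (∑ i, Pov i) = 1 ∧
    x = ∑ i, q i * (ip (d i) ((Pov i) *ᵥ (d i))).re }

lemma Ps_eq_sSup_povmValues {m n : ℕ} (d : Fin n → Fin m → ℂ) (q : Fin n → ℝ) :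
    Ps d q = sSup (povmValues d q) := rfl

lemma one_div_mem_povmValues {m n : ℕ} (hn : n ≠ 0) {d : Fin n → Fin m → ℂ}
    (hd : ∀ i, ip (d i) (d i) = 1) {q : Fin n → ℝ} (hq : ∑ i, q i = 1) :
    1 / (n : ℝ) ∈ povmValues d q := by
  have hn' : ((n : ℝ) : ℂ) ≠ 0 := by exact_mod_cast hn
  refine ⟨fun _ => (((n : ℝ)⁻¹ : ℝ) : ℂ) • 1,
    fun _ => PosSemidef.one.smul (Complex.zero_le_real.2 (by positivity)), ?_, ?_⟩
  · rw [Finset.sum_const, Finset.card_univ, Fintype.card_fin, ← Nat.cast_smul_eq_nsmul ℂ,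
      smul_smul, Complex.ofReal_inv, ← Complex.ofReal_natCast, mul_inv_cancel₀ hn', one_smul]
  · simp only [smul_mulVec, one_mulVec, ip_smul_right, hd, mul_one, Complex.ofReal_re,
      ← Finset.sum_mul, hq, one_div, one_mul]

open Finset in
theorem sq_Ps_sub_one_div_le {m n : ℕ} (hn : 2 ≤ n) {d : Fin n → Fin m → ℂ}
    (hd : ∀ i, ip (d i) (d i) = 1) {p : Fin n → ℝ} (hp : ∀ i, 0 ≤ p i) (hp1 : ∑ i, p i = 1) :
    (Ps d p - 1 / n) ^ 2 ≤ (((n : ℝ) - 1) ^ 2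
      - 2 * (n - 1) * ∑ i, ∑ k ∈ univ.erase i, p i * p k * ‖ip (d k) (d i)‖ ^ 2) / n ^ 2 := by
  have hn0 : (0 : ℝ) < n := by positivity
  rw [Ps_eq_sSup_povmValues]
  refine sSup_sub_sq_le (one_div_mem_povmValues (by omega) hd hp1) ?_
  rintro x ⟨Pov, hpos, hsum, rfl⟩ hx
  rw [div_le_iff₀' hn0] at hx
  rw [le_div_iff₀ (by positivity), show ∀ y : ℝ, (y - 1 / n) ^ 2 * n ^ 2 = (n * y - 1) ^ 2 by
    intro y; field_simp]
  linarith [sq_success_sub_one_add_offDiag_le hn hd hp hp1 hpos hsum hx]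

section States

open Finset

lemma Vis_eq_zero {m n : ℕ} (d : Fin n → Fin m → ℂ) {ρ : Matrix (Fin n) (Fin n) ℂ}
    (hρ : ∀ i k, i ≠ k → ρ i k = 0) : Vis d ρ = 0 := by
  have h (i k : Fin n) : (if i = k then 0 else ‖ip (d k) (d i)‖ ^ 2 * ‖ρ i k‖ ^ 2) = 0 := by
    split_ifs with hik <;> simp [hρ i k, hik]
  simp [Vis, h]

lemma purity_diagonal {ι : Type*} [Fintype ι] [DecidableEq ι] (p : ι → ℝ) :
    purity (diagonal fun i => (p i : ℂ)) = ∑ i, p i ^ 2 := by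
  simp [purity, diagonal_mul_diagonal, trace_diagonal, Complex.re_sum, ← Complex.ofReal_mul, sq]

lemma trace_mul_self_prod {α β : Type*} [Fintype α] [Fintype β]
    (A : Matrix (α × β) (α × β) ℂ) :
    (A * A).trace = ∑ i, ∑ k, ∑ a, ∑ b, A (i, a) (k, b) * A (k, b) (i, a) := by
  simp only [trace, Matrix.diag, mul_apply, Fintype.sum_prod_type]
  exact sum_congr rfl fun i _ => sum_comm

variable {n : ℕ} {p : Fin n → ℝ} {u : Fin n → Fin n → ℂ}

lemma ptraceB_pure_eq_diagonal (hp : ∀ i, 0 ≤ p i)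
    (hu : ∀ i j, ip (u i) (u j) = if i = j then 1 else 0) :
    ptraceB (vecMulVec (fun x => (√(p x.1) : ℂ) * u x.1 x.2)
      (star fun x => (√(p x.1) : ℂ) * u x.1 x.2)) = diagonal fun i => (p i : ℂ) := by
  ext i k
  have h (j : Fin n) : (√(p i) : ℂ) * u i j * star ((√(p k) : ℂ) * u k j)
      = (√(p i) : ℂ) * √(p k) * (star (u k j) * u i j) := by
    rw [star_mul', Complex.star_def, Complex.conj_ofReal]; ring
  simp only [ptraceB, of_apply, vecMulVec_apply, Pi.star_apply, h, ← mul_sum]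
  rw [← ip, hu k i]
  rcases eq_or_ne i k with rfl | hik
  · simp [← Complex.ofReal_mul, Real.mul_self_sqrt (hp i)]
  · simp [Ne.symm hik, hik]

lemma sum_sum_mul_norm_ip_sq_eq {m : ℕ} {d : Fin n → Fin m → ℂ} (hd : ∀ i, ip (d i) (d i) = 1) :
    ∑ i, ∑ k, p i * p k * ‖ip (d k) (d i)‖ ^ 2
      = ∑ i, p i ^ 2 + ∑ i, ∑ k ∈ univ.erase i, p i * p k * ‖ip (d k) (d i)‖ ^ 2 := by
  simp only [sum_sum_erase_eq_sub, hd, norm_one, one_pow, mul_one, ← sq]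
  ring

lemma purity_postState {m : ℕ} (d : Fin n → Fin m → ℂ) (hp : ∀ i, 0 ≤ p i)
    (hu : ∀ i j, ip (u i) (u j) = if i = j then 1 else 0) :
    purity (Matrix.of fun x y : Fin n × Fin n =>
      (√(p x.1 * p y.1) : ℂ) * ip (d y.1) (d x.1) * u x.1 x.2 * star (u y.1 y.2))
      = ∑ i, ∑ k, p i * p k * ‖ip (d k) (d i)‖ ^ 2 := by
  have h (i k a b : Fin n) :
      (√(p i * p k) : ℂ) * ip (d k) (d i) * u i a * star (u k b)
        * ((√(p k * p i) : ℂ) * ip (d i) (d k) * u k b * star (u i a))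
      = ((p i * p k * ‖ip (d k) (d i)‖ ^ 2 : ℝ) : ℂ) * (star (u i a) * u i a)
        * (star (u k b) * u k b) := by
    set z := ip (d k) (d i)
    have hz : z * star z = ((‖z‖ ^ 2 : ℝ) : ℂ) := by
      rw [Complex.star_def, Complex.mul_conj']; push_cast; ring
    have hs : (√(p i * p k) : ℂ) * √(p i * p k) = ((p i * p k : ℝ) : ℂ) := by
      rw [← Complex.ofReal_mul, Real.mul_self_sqrt (mul_nonneg (hp i) (hp k))]
    rw [← star_ip (d k) (d i), mul_comm (p k)]
    calc _ = ((√(p i * p k) : ℂ) * √(p i * p k)) * (z * star z) * (star (u i a) * u i a)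
          * (star (u k b) * u k b) := by ring
      _ = _ := by rw [hs, hz]; push_cast; ring
  have hunit (i : Fin n) : ∑ a, star (u i a) * u i a = 1 := by rw [← ip, hu i i, if_pos rfl]
  simp only [purity, trace_mul_self_prod, of_apply, h, ← mul_sum, hunit, mul_one,
    Complex.re_sum, Complex.ofReal_re]

end States

/-- for a pure bipartite input state with orthonormal memory states, the
visibility vanishes, the normalized concurrence squared is `(2(n−1)/n²)(1 − ∑ i, p_i²)`,
and the duality between path distinguishability and entanglement holds. -/
theorem stmt16 (n m : ℕ) (hn : 2 ≤ n) (d : Fin n → Fin m → ℂ)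
    (hd : ∀ i, ip (d i) (d i) = 1)
    (p : Fin n → ℝ) (hp : ∀ i, 0 ≤ p i) (hp1 : ∑ i, p i = 1)
    (u : Fin n → Fin n → ℂ)
    (hu : ∀ i j, ip (u i) (u j) = if i = j then 1 else 0)
    -- the pure bipartite input state ψ_AB = ∑ i, √(p i) • e_i ⊗ u_i
    (ψ : Fin n × Fin n → ℂ) (hψ : ψ = fun x => (Real.sqrt (p x.1) : ℂ) * u x.1 x.2)
    -- the reduced state of the particle
    (ρA : Matrix (Fin n) (Fin n) ℂ)
    (hρA : ρA = Matrix.of fun i k => (Real.sqrt (p i * p k) : ℂ) * ip (u k) (u i))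
    -- the normalized concurrence squared E(ψ_AB)² = (2(n−1)/n²)(1 − Tr((Tr_B ψψ^*)²))
    (Esq : ℝ)
    (hE : Esq = (2 * ((n : ℝ) - 1) / (n : ℝ) ^ 2) *
      (1 - purity (ptraceB (vecMulVec ψ (star ψ)))))
    -- the post-interaction bipartite state
    (ρtAB : Matrix (Fin n × Fin n) (Fin n × Fin n) ℂ)
    (hρtAB : ρtAB = Matrix.of fun x y =>
      (Real.sqrt (p x.1 * p y.1) : ℂ) * ip (d y.1) (d x.1) * u x.1 x.2 * star (u y.1 y.2)) :
    Vis d ρA = 0 ∧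
    Esq = (2 * ((n : ℝ) - 1) / (n : ℝ) ^ 2) * (1 - ∑ i, (p i) ^ 2) ∧
    (Ps d p - 1 / n) ^ 2 + Esq ≤
      ((n : ℝ) ^ 2 - 1) / (n : ℝ) ^ 2 -
        (2 * ((n : ℝ) - 1) / (n : ℝ) ^ 2) * purity ρtAB := by
  subst hψ hρA hE hρtAB
  refine ⟨Vis_eq_zero d fun i k hik => by simp [hu k i, Ne.symm hik], ?_, ?_⟩
  · rw [ptraceB_pure_eq_diagonal hp hu, purity_diagonal]
  · rw [ptraceB_pure_eq_diagonal hp hu, purity_diagonal, purity_postState d hp hu,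
      sum_sum_mul_norm_ip_sq_eq hd]
    have hsq := sq_Ps_sub_one_div_le hn hd hp hp1
    have hn0 : (n : ℝ) ≠ 0 := by positivity
    set OD := ∑ i, ∑ k ∈ Finset.univ.erase i, p i * p k * ‖ip (d k) (d i)‖ ^ 2
    have e : ((n : ℝ) ^ 2 - 1) / n ^ 2 - 2 * (n - 1) / n ^ 2 * (∑ i, p i ^ 2 + OD)
        - 2 * (n - 1) / n ^ 2 * (1 - ∑ i, p i ^ 2)
        = (((n : ℝ) - 1) ^ 2 - 2 * (n - 1) * OD) / n ^ 2 := by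
      field_simp; ring
    linarith
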